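/- arXiv:2308.03208 — 2 statements merged into one kernel-verified Lean document; each statement's English description precedes it below -/
import Mathlib

section
/- In 2×2×2 Abalone, the board B11 (Black marbles on spaces a and c, Gray marbles on spaces b and d of the middle column arrangement described) is a win for Black regardless of who moves first: if Gray moves first their only move endangers their marble and Black pushes it off; if Black moves first Black can move to an isomorphic board. -/
/-- An abstract two-player game with perfect information and alternating moves.
`true` denotes Left (Black) and `false` denotes Right (Gray). -/
structure AGame (P : Type*) where
  /-- `move pl p q` : player `pl` has a legal move from position `p` to position `q`. -/
  move : Bool → P → P → Prop
  /-- `win pl p` : the position `p` is a terminal win for player `pl`. -/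
  win : Bool → P → Prop

namespace AGame

variable {P : Type*}

/-- `FW G pl turn p` : player `pl` can force a win (in finitely many moves)
from position `p` when it is `turn`'s move. -/
inductive FW (G : AGame P) (pl : Bool) : Bool → P → Prop
  | terminal (turn : Bool) (p : P) : G.win pl p → FW G pl turn p
  | self (p q : P) : ¬ G.win (!pl) p → G.move pl p q → FW G pl (!pl) q → FW G pl pl p
  | opp (p : P) : ¬ G.win (!pl) p → (∃ q, G.move (!pl) p q) →
      (∀ q, G.move (!pl) p q → FW G pl pl q) → FW G pl (!pl) p

/-- Outcome class `L` : Left (Black) always wins, whoever moves first. -/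
def OutL (G : AGame P) (p : P) : Prop := G.FW true true p ∧ G.FW true false p

/-- Outcome class `R` : Right (Gray) always wins, whoever moves first. -/
def OutR (G : AGame P) (p : P) : Prop := G.FW false false p ∧ G.FW false true p

/-- Outcome class `N` : whoever moves next wins. -/
def OutN (G : AGame P) (p : P) : Prop := G.FW true true p ∧ G.FW false false p

/-- Outcome class `D` : neither player can force a win (optimal play is an infinite draw). -/
def OutD (G : AGame P) (p : P) : Prop :=
  ¬ G.FW true true p ∧ ¬ G.FW true false p ∧ ¬ G.FW false true p ∧ ¬ G.FW false false p

/-- Outcome class `N̂` : Left wins moving first, and the game is a draw if Right moves first. -/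
def OutNhat (G : AGame P) (p : P) : Prop :=
  G.FW true true p ∧ ¬ G.FW true false p ∧ ¬ G.FW false false p

/-- Outcome class `Ň` : Right wins moving first, and the game is a draw if Left moves first. -/
def OutNcheck (G : AGame P) (p : P) : Prop :=
  G.FW false false p ∧ ¬ G.FW false true p ∧ ¬ G.FW true true p

end AGame

namespace Abalone

/-- A board cell, in axial hexagonal coordinates `(q, r)` where `q` is the column. -/
abbrev Cell : Type := ℤ × ℤ

/-- A constellation: each cell carries a black marble (`some true`),
a gray marble (`some false`), or is empty (`none`). -/
abbrev Pos : Type := Cell → Option Bool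

/-- The six unit directions of the hexagonal grid. -/
def dirs : List Cell := [(1, 0), (0, 1), (-1, 1), (-1, 0), (0, -1), (1, -1)]

/-- Add a direction to a cell. -/
def addc (x d : Cell) : Cell := (x.1 + d.1, x.2 + d.2)

/-- The cell `n` steps from `x` in direction `d`. -/
def stepc (x : Cell) (n : ℕ) (d : Cell) : Cell := (x.1 + (n : ℤ) * d.1, x.2 + (n : ℤ) * d.2)

/-- The opposite direction. -/
def negd (d : Cell) : Cell := (-d.1, -d.2)

open Classical in
/-- The result of shifting the line of `len` marbles starting one step after `x`
(in direction `d`, with the marble at `x` itself moving into the vacated space):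
cell `x` is vacated, each cell `x + i·d` (`1 ≤ i ≤ len`) receives the content of its
predecessor, and marbles shifted off the board are removed. -/
noncomputable def shiftResult (board : Finset Cell) (c : Pos) (x d : Cell) (len : ℕ) : Pos :=
  fun y =>
    if y ∉ board then none
    else if y = x then none
    else if ∃ i : ℕ, 1 ≤ i ∧ i ≤ len ∧ y = stepc x i d then c (addc y (negd d))
    else c y

/-- In-line movement (including sumito pushes): player `pl` moves a line of `k` of their
own contiguous marbles (`1 ≤ k ≤ maxG`) one step in the line's direction `d`, possibly
pushing a strictly shorter opposing line of `m < k` marbles, the leading opposing marble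
being pushed either onto an empty board cell or off the board. -/
def InlineMove (board : Finset Cell) (maxG : ℕ) (pl : Bool) (c c' : Pos) : Prop :=
  ∃ x d, d ∈ dirs ∧ ∃ k m : ℕ,
    1 ≤ k ∧ k ≤ maxG ∧ m < k ∧
    (∀ i < k, stepc x i d ∈ board ∧ c (stepc x i d) = some pl) ∧
    (∀ i, k ≤ i → i < k + m → stepc x i d ∈ board ∧ c (stepc x i d) = some (!pl)) ∧
    ((m = 0 ∧ stepc x k d ∈ board ∧ c (stepc x k d) = none) ∨
      (1 ≤ m ∧ (stepc x (k + m) d ∉ board ∨ c (stepc x (k + m) d) = none))) ∧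
    c' = shiftResult board c x d (k + m)

open Classical in
/-- The result of a broadside move: the `k` marbles at `x + i·d` (`i < k`) each move
one step in direction `e`. -/
noncomputable def broadResult (c : Pos) (pl : Bool) (x d e : Cell) (k : ℕ) : Pos :=
  fun y =>
    if ∃ i < k, y = stepc x i d then none
    else if ∃ i < k, y = addc (stepc x i d) e then some pl
    else c y

/-- Broadside movement: player `pl` moves a line of `k` of their own contiguous marbles
(`1 ≤ k ≤ maxG`, the line in direction `d`) one step in a direction `e` not along the
line, each marble landing on an empty board cell. -/
def BroadsideMove (board : Finset Cell) (maxG : ℕ) (pl : Bool) (c c' : Pos) : Prop :=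
  ∃ x d e, d ∈ dirs ∧ e ∈ dirs ∧ e ≠ d ∧ e ≠ negd d ∧ ∃ k : ℕ,
    1 ≤ k ∧ k ≤ maxG ∧
    (∀ i < k, stepc x i d ∈ board ∧ c (stepc x i d) = some pl) ∧
    (∀ i < k, addc (stepc x i d) e ∈ board ∧ c (addc (stepc x i d) e) = none) ∧
    c' = broadResult c pl x d e k

/-- A legal Abalone move for player `pl`. -/
def Move (board : Finset Cell) (maxG : ℕ) (pl : Bool) (c c' : Pos) : Prop :=
  InlineMove board maxG pl c c' ∨ BroadsideMove board maxG pl c c'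

/-- The number of marbles of player `pl` on the board. -/
def countM (board : Finset Cell) (pl : Bool) (c : Pos) : ℕ :=
  (board.filter (fun y => c y = some pl)).card

/-- Player `pl` has won: the opponent has fewer than `n` marbles left,
i.e. at least one opposing marble has been pushed off the board. -/
def Wins (board : Finset Cell) (n : ℕ) (pl : Bool) (c : Pos) : Prop :=
  countM board (!pl) c < n

/-- The negative of a constellation: swap black and gray marbles. -/
def negP (c : Pos) : Pos := fun y => (c y).map (fun b => !b)

end Abalone

namespace Abalone

/-! ### The 2×2×2 Abalone board

A hexagonal grid of 7 cells (columns of sizes 2, 3, 2). In axial coordinates, the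
left column is `lt = (-1,0)` (top), `lb = (-1,1)` (bottom); the middle column is
`mt = (0,-1)`, `mm = (0,0)`, `mb = (0,1)`; the right column is `rt = (1,-1)`,
`rb = (1,0)`. Each player has 2 marbles, may move 1–2 contiguous marbles, a 2-line
may push 1 opposing marble, and a player wins by ejecting one opposing marble. -/

def lt : Cell := (-1, 0)
def lb : Cell := (-1, 1)
def mt : Cell := (0, -1)
def mm : Cell := (0, 0)
def mb : Cell := (0, 1)
def rt : Cell := (1, -1)
def rb : Cell := (1, 0)

def board222 : Finset Cell := {lt, lb, mt, mm, mb, rt, rb}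

/-- 2×2×2 Abalone as a game: moves of 1–2 contiguous marbles, win by
reducing the opponent to fewer than 2 marbles. -/
def G222 : AGame Pos :=
  { move := Move board222 2
    win := Wins board222 2 }

/-- The constellation with black marbles on `b1, b2` and gray marbles on `g1, g2`. -/
def mk2 (b1 b2 g1 g2 : Cell) : Pos := fun y =>
  if y = b1 ∨ y = b2 then some true
  else if y = g1 ∨ y = g2 then some false
  else none

/-- The 14 boards `B0`–`B13` of the paper (Figure 4). -/
def B0 : Pos := mk2 lt lb rt rb
def B1 : Pos := mk2 lt rb lb rt
def B2 : Pos := mk2 lt rt lb rb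
def B3 : Pos := mk2 lt mb lb mt
def B4 : Pos := mk2 lt mt lb mb
def B5 : Pos := mk2 mt mb lt lb
def B6 : Pos := mk2 lt rb lb mt
def B7 : Pos := mk2 rb mt lt lb
def B8 : Pos := mk2 lt mm mb rb
def B9 : Pos := mk2 lt mm mb rt
def B10 : Pos := mk2 lt mm lb rt
def B11 : Pos := mk2 lt mm lb mb
def B12 : Pos := mk2 lt mm lb rb
def B13 : Pos := mk2 lt mm lb mt

end Abalone
namespace Abalone

/-! ### Auxiliary development for the proof -/

def Agr (c c' : Pos) : Prop := ∀ y ∈ board222, c y = c' y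

lemma agr_symm {c c' : Pos} (h : Agr c c') : Agr c' c := fun y hy => (h y hy).symm

lemma wins_agr {c c' : Pos} (h : Agr c c') (pl : Bool) :
    Wins board222 2 pl c ↔ Wins board222 2 pl c' := by
  unfold Wins countM
  rw [Finset.filter_congr (fun y hy => by rw [h y hy])]

lemma stepc_zero (x d : Cell) : stepc x 0 d = x := by simp [stepc]

lemma addc_negd (x d : Cell) (i : ℕ) (hi : 1 ≤ i) :
    addc (stepc x i d) (negd d) = stepc x (i - 1) d := by
  obtain ⟨n, rfl⟩ : ∃ n, i = n + 1 := ⟨i - 1, by omega⟩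
  simp only [addc, negd, stepc, Prod.ext_iff, Nat.add_sub_cancel]
  constructor <;> push_cast <;> ring

lemma agr_shiftResult {c c' : Pos} (h : Agr c c') (x d : Cell) (k m : ℕ)
    (hchain : ∀ i < k + m, stepc x i d ∈ board222) :
    Agr (shiftResult board222 c x d (k + m)) (shiftResult board222 c' x d (k + m)) := by
  intro y hy
  unfold shiftResult
  rw [if_neg (not_not_intro hy), if_neg (not_not_intro hy)]
  split_ifs with h1 h2
  · rfl
  · obtain ⟨i, hi1, hi2, rfl⟩ := h2
    rw [addc_negd x d i hi1]
    exact h _ (hchain (i - 1) (by omega))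
  · exact h y hy

lemma agr_broadResult {c c' : Pos} (h : Agr c c') (pl : Bool) (x d e : Cell) (k : ℕ) :
    Agr (broadResult c pl x d e k) (broadResult c' pl x d e k) := by
  intro y hy
  unfold broadResult
  split_ifs <;> first | rfl | exact h y hy

lemma move_agr {c c' q : Pos} (h : Agr c c') (pl : Bool)
    (hm : Move board222 2 pl c q) : ∃ q', Move board222 2 pl c' q' ∧ Agr q q' := by
  rcases hm with ⟨x, d, hd, k, m, hk1, hk2, hmk, hown, hopp, hlast, rfl⟩ |
    ⟨x, d, e, hd, he, hed, hed', k, hk1, hk2, hown, htgt, rfl⟩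
  · have hchain : ∀ i < k + m, stepc x i d ∈ board222 := by
      intro i hi
      rcases Nat.lt_or_ge i k with h' | h'
      · exact (hown i h').1
      · exact (hopp i h' hi).1
    refine ⟨_, Or.inl ⟨x, d, hd, k, m, hk1, hk2, hmk, ?_, ?_, ?_, rfl⟩,
      agr_shiftResult h x d k m hchain⟩
    · intro i hi
      exact ⟨(hown i hi).1, by rw [← h _ (hown i hi).1]; exact (hown i hi).2⟩
    · intro i hi1 hi2
      exact ⟨(hopp i hi1 hi2).1, by rw [← h _ (hopp i hi1 hi2).1]; exact (hopp i hi1 hi2).2⟩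
    · rcases hlast with ⟨h0, hb, hc⟩ | ⟨h1, hc⟩
      · exact Or.inl ⟨h0, hb, by rw [← h _ hb]; exact hc⟩
      · refine Or.inr ⟨h1, ?_⟩
        by_cases hb : stepc x (k + m) d ∈ board222
        · rcases hc with hc | hc
          · exact Or.inl hc
          · exact Or.inr (by rw [← h _ hb]; exact hc)
        · exact Or.inl hb
  · refine ⟨_, Or.inr ⟨x, d, e, hd, he, hed, hed', k, hk1, hk2, ?_, ?_, rfl⟩,
      agr_broadResult h pl x d e k⟩
    · intro i hi
      exact ⟨(hown i hi).1, by rw [← h _ (hown i hi).1]; exact (hown i hi).2⟩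
    · intro i hi
      exact ⟨(htgt i hi).1, by rw [← h _ (htgt i hi).1]; exact (htgt i hi).2⟩

lemma fw_agr : ∀ {pl t : Bool} {c : Pos}, AGame.FW G222 pl t c →
    ∀ c' : Pos, Agr c c' → AGame.FW G222 pl t c' := by
  intro pl t c hf
  induction hf with
  | terminal t p hw =>
      intro c' h
      exact AGame.FW.terminal t c' ((wins_agr h pl).mp hw)
  | self p q hnw hm hq ih =>
      intro c' h
      obtain ⟨q', hm', hq'⟩ := move_agr h pl hm
      exact AGame.FW.self c' q' (fun hw => hnw ((wins_agr h _).mpr hw)) hm' (ih q' hq')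
  | opp p hnw hex hall ih =>
      intro c' h
      obtain ⟨q0, hm0⟩ := hex
      obtain ⟨q0', hm0', _⟩ := move_agr h (!pl) hm0
      refine AGame.FW.opp c' (fun hw => hnw ((wins_agr h _).mpr hw)) ⟨q0', hm0'⟩ ?_
      intro q' hq'
      obtain ⟨q, hm, ha⟩ := move_agr (agr_symm h) (!pl) hq'
      exact ih q hm q' (agr_symm ha)

lemma exists_chain_iff (x d : Cell) (len : ℕ) (hlen : len ≤ 3) (y : Cell) :
    (∃ i : ℕ, 1 ≤ i ∧ i ≤ len ∧ y = stepc x i d) ↔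
      (1 ≤ len ∧ y = stepc x 1 d) ∨ (2 ≤ len ∧ y = stepc x 2 d) ∨
        (3 ≤ len ∧ y = stepc x 3 d) := by
  constructor
  · rintro ⟨i, h1, h2, rfl⟩
    have h3 : i ≤ 3 := by omega
    interval_cases i
    · exact Or.inl ⟨by omega, rfl⟩
    · exact Or.inr (Or.inl ⟨by omega, rfl⟩)
    · exact Or.inr (Or.inr ⟨by omega, rfl⟩)
  · rintro (⟨h, rfl⟩ | ⟨h, rfl⟩ | ⟨h, rfl⟩)
    exacts [⟨1, by omega, by omega, rfl⟩, ⟨2, by omega, by omega, rfl⟩,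
      ⟨3, by omega, by omega, rfl⟩]

lemma shiftResult_eval (c : Pos) (x d : Cell) (len : ℕ) (hlen : len ≤ 3) (y : Cell)
    (hy : y ∈ board222) :
    shiftResult board222 c x d len y =
      if y = x then none
      else if (1 ≤ len ∧ y = stepc x 1 d) ∨ (2 ≤ len ∧ y = stepc x 2 d) ∨
          (3 ≤ len ∧ y = stepc x 3 d)
        then c (addc y (negd d)) else c y := by
  unfold shiftResult
  rw [if_neg (not_not_intro hy)]
  by_cases h1 : y = x
  · rw [if_pos h1, if_pos h1]
  rw [if_neg h1, if_neg h1]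
  by_cases h2 : ∃ i : ℕ, 1 ≤ i ∧ i ≤ len ∧ y = stepc x i d
  · rw [if_pos h2, if_pos ((exists_chain_iff x d len hlen y).mp h2)]
  · rw [if_neg h2, if_neg (fun hh => h2 ((exists_chain_iff x d len hlen y).mpr hh))]

lemma exists_lt_iff (x d : Cell) (k : ℕ) (hk : k ≤ 2) (y : Cell) :
    (∃ i < k, y = stepc x i d) ↔ (1 ≤ k ∧ y = x) ∨ (2 ≤ k ∧ y = stepc x 1 d) := by
  constructor
  · rintro ⟨i, hi, rfl⟩
    have h1 : i ≤ 1 := by omega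
    interval_cases i
    · exact Or.inl ⟨by omega, stepc_zero x d⟩
    · exact Or.inr ⟨by omega, rfl⟩
  · rintro (⟨h, h'⟩ | ⟨h, h'⟩)
    exacts [⟨0, by omega, by rw [stepc_zero]; exact h'⟩, ⟨1, by omega, h'⟩]

lemma exists_lt_addc_iff (x d e : Cell) (k : ℕ) (hk : k ≤ 2) (y : Cell) :
    (∃ i < k, y = addc (stepc x i d) e) ↔
      (1 ≤ k ∧ y = addc x e) ∨ (2 ≤ k ∧ y = addc (stepc x 1 d) e) := by
  constructor
  · rintro ⟨i, hi, rfl⟩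
    have h1 : i ≤ 1 := by omega
    interval_cases i
    · exact Or.inl ⟨by omega, by rw [stepc_zero]⟩
    · exact Or.inr ⟨by omega, rfl⟩
  · rintro (⟨h, h'⟩ | ⟨h, h'⟩)
    exacts [⟨0, by omega, by rw [stepc_zero]; exact h'⟩, ⟨1, by omega, h'⟩]

lemma broadResult_eval (c : Pos) (pl : Bool) (x d e : Cell) (k : ℕ) (hk : k ≤ 2) (y : Cell) :
    broadResult c pl x d e k y =
      if (1 ≤ k ∧ y = x) ∨ (2 ≤ k ∧ y = stepc x 1 d) then none
      else if (1 ≤ k ∧ y = addc x e) ∨ (2 ≤ k ∧ y = addc (stepc x 1 d) e) then some pl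
      else c y := by
  unfold broadResult
  by_cases hA : ∃ i < k, y = stepc x i d
  · rw [if_pos hA, if_pos ((exists_lt_iff x d k hk y).mp hA)]
  rw [if_neg hA, if_neg (fun hh => hA ((exists_lt_iff x d k hk y).mpr hh))]
  by_cases hB : ∃ i < k, y = addc (stepc x i d) e
  · rw [if_pos hB, if_pos ((exists_lt_addc_iff x d e k hk y).mp hB)]
  · rw [if_neg hB, if_neg (fun hh => hB ((exists_lt_addc_iff x d e k hk y).mpr hh))]

lemma mk2_false {b1 b2 g1 g2 y : Cell} (h : mk2 b1 b2 g1 g2 y = some false) :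
    y = g1 ∨ y = g2 := by
  unfold mk2 at h
  split_ifs at h with h1 h2 <;> simp_all

/-- Black `mm, rb`, gray `lb, mb`: the image of B11 after Black's first move. -/
def C1 : Pos := mk2 mm rb lb mb
/-- Black `mm, rb`, gray `lt, mb`: after gray's forced reply from `C1`. -/
def C2 : Pos := mk2 mm rb lt mb
/-- Black `mm, rb`, gray `lb`: Black has won. -/
def W1 : Pos := fun y => if y = mm ∨ y = rb then some true else if y = lb then some false else none
/-- Black `lt, mm`, gray `mb`: Black has won. -/
def W2 : Pos := fun y => if y = lt ∨ y = mm then some true else if y = mb then some false else none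

end Abalone
namespace Abalone

lemma gray_B11 : ∀ q, Move board222 2 false B11 q → Agr q B12 := by
  intro q hm
  rcases hm with ⟨x, d, hd, k, m, hk1, hk2, hmk, hown, hopp, hlast, rfl⟩ |
    ⟨x, d, e, hd, he, hed, hed', k, hk1, hk2, hown, htgt, rfl⟩
  · have hx0 := hown 0 (by omega)
    rw [stepc_zero] at hx0
    have hx : x = lb ∨ x = mb := mk2_false hx0.2
    simp only [dirs, List.mem_cons, List.not_mem_nil, or_false] at hd
    interval_cases k <;> interval_cases m <;>
      rcases hx with rfl | rfl <;>
      rcases hd with rfl | rfl | rfl | rfl | rfl | rfl <;>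
      first
        | (exfalso; revert hlast; decide)
        | (exfalso; have hc := hown 1 (by omega); revert hc; decide)
        | (exfalso; have hc := hopp 1 (by omega) (by omega); revert hc; decide)
        | (exfalso; have hc := hopp 2 (by omega) (by omega); revert hc; decide)
        | (intro y hy; rw [shiftResult_eval _ _ _ _ (by omega) y hy]; fin_cases hy <;> decide)
  · have hx0 := hown 0 (by omega)
    rw [stepc_zero] at hx0
    have hx : x = lb ∨ x = mb := mk2_false hx0.2
    simp only [dirs, List.mem_cons, List.not_mem_nil, or_false] at hd he
    interval_cases k <;>
      rcases hx with rfl | rfl <;>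
      rcases hd with rfl | rfl | rfl | rfl | rfl | rfl <;>
      rcases he with rfl | rfl | rfl | rfl | rfl | rfl <;>
      first
        | (exact absurd (by decide) hed)
        | (exact absurd (by decide) hed')
        | (exfalso; have hc := htgt 0 (by omega); rw [stepc_zero] at hc; revert hc; decide)
        | (exfalso; have hc := hown 1 (by omega); revert hc; decide)
        | (exfalso; have hc := htgt 1 (by omega); revert hc; decide)
        | (intro y hy; rw [broadResult_eval _ _ _ _ _ _ (by omega) y]; fin_cases hy <;> decide)

lemma gray_C1 : ∀ q, Move board222 2 false C1 q → Agr q C2 := by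
  intro q hm
  rcases hm with ⟨x, d, hd, k, m, hk1, hk2, hmk, hown, hopp, hlast, rfl⟩ |
    ⟨x, d, e, hd, he, hed, hed', k, hk1, hk2, hown, htgt, rfl⟩
  · have hx0 := hown 0 (by omega)
    rw [stepc_zero] at hx0
    have hx : x = lb ∨ x = mb := mk2_false hx0.2
    simp only [dirs, List.mem_cons, List.not_mem_nil, or_false] at hd
    interval_cases k <;> interval_cases m <;>
      rcases hx with rfl | rfl <;>
      rcases hd with rfl | rfl | rfl | rfl | rfl | rfl <;>
      first
        | (exfalso; revert hlast; decide)
        | (exfalso; have hc := hown 1 (by omega); revert hc; decide)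
        | (exfalso; have hc := hopp 1 (by omega) (by omega); revert hc; decide)
        | (exfalso; have hc := hopp 2 (by omega) (by omega); revert hc; decide)
        | (intro y hy; rw [shiftResult_eval _ _ _ _ (by omega) y hy]; fin_cases hy <;> decide)
  · have hx0 := hown 0 (by omega)
    rw [stepc_zero] at hx0
    have hx : x = lb ∨ x = mb := mk2_false hx0.2
    simp only [dirs, List.mem_cons, List.not_mem_nil, or_false] at hd he
    interval_cases k <;>
      rcases hx with rfl | rfl <;>
      rcases hd with rfl | rfl | rfl | rfl | rfl | rfl <;>
      rcases he with rfl | rfl | rfl | rfl | rfl | rfl <;>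
      first
        | (exact absurd (by decide) hed)
        | (exact absurd (by decide) hed')
        | (exfalso; have hc := htgt 0 (by omega); rw [stepc_zero] at hc; revert hc; decide)
        | (exfalso; have hc := hown 1 (by omega); revert hc; decide)
        | (exfalso; have hc := htgt 1 (by omega); revert hc; decide)
        | (intro y hy; rw [broadResult_eval _ _ _ _ _ _ (by omega) y]; fin_cases hy <;> decide)

end Abalone
namespace Abalone

/-- Black's opening move from `B11`: slide the `lt, mm` line to `mm, rb`. -/
lemma black_move_B11 : Move board222 2 true B11 (shiftResult board222 B11 lt (1, 0) (2 + 0)) := by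
  refine Or.inl ⟨lt, (1, 0), by decide, 2, 0, by omega, le_refl 2, by omega, by decide,
    ?_, Or.inl ⟨rfl, by decide, by decide⟩, rfl⟩
  intro i h1 h2; omega

lemma agr_black_move_B11 : Agr (shiftResult board222 B11 lt (1, 0) (2 + 0)) C1 := by
  intro y hy
  rw [shiftResult_eval _ _ _ _ (by omega) y hy]
  fin_cases hy <;> decide

/-- Gray's only move from `B11`: `mb` to `rb`. -/
lemma gray_move_B11 : Move board222 2 false B11 (shiftResult board222 B11 mb (1, -1) (1 + 0)) := by
  refine Or.inl ⟨mb, (1, -1), by decide, 1, 0, le_refl 1, by omega, by omega, by decide,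
    ?_, Or.inl ⟨rfl, by decide, by decide⟩, rfl⟩
  intro i h1 h2; omega

/-- Gray's only move from `C1`: `lb` to `lt`. -/
lemma gray_move_C1 : Move board222 2 false C1 (shiftResult board222 C1 lb (0, -1) (1 + 0)) := by
  refine Or.inl ⟨lb, (0, -1), by decide, 1, 0, le_refl 1, by omega, by omega, by decide,
    ?_, Or.inl ⟨rfl, by decide, by decide⟩, rfl⟩
  intro i h1 h2; omega

/-- Black's winning push from `B12`: the `lt, mm` line pushes the gray marble on `rb` off. -/
lemma black_push_B12 : Move board222 2 true B12 (shiftResult board222 B12 lt (1, 0) (2 + 1)) := by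
  refine Or.inl ⟨lt, (1, 0), by decide, 2, 1, by omega, le_refl 2, by omega, by decide,
    ?_, Or.inr ⟨le_refl 1, Or.inl (by decide)⟩, rfl⟩
  intro i h1 h2
  have : i = 2 := by omega
  subst this; decide

lemma agr_black_push_B12 : Agr (shiftResult board222 B12 lt (1, 0) (2 + 1)) W1 := by
  intro y hy
  rw [shiftResult_eval _ _ _ _ (by omega) y hy]
  fin_cases hy <;> decide

/-- Black's winning push from `C2`: the `rb, mm` line pushes the gray marble on `lt` off. -/
lemma black_push_C2 : Move board222 2 true C2 (shiftResult board222 C2 rb (-1, 0) (2 + 1)) := by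
  refine Or.inl ⟨rb, (-1, 0), by decide, 2, 1, by omega, le_refl 2, by omega, by decide,
    ?_, Or.inr ⟨le_refl 1, Or.inl (by decide)⟩, rfl⟩
  intro i h1 h2
  have : i = 2 := by omega
  subst this; decide

lemma agr_black_push_C2 : Agr (shiftResult board222 C2 rb (-1, 0) (2 + 1)) W2 := by
  intro y hy
  rw [shiftResult_eval _ _ _ _ (by omega) y hy]
  fin_cases hy <;> decide

/-- Black to move wins from `B12`. -/
lemma fw_B12 : AGame.FW G222 true true B12 := by
  refine AGame.FW.self B12 _ (show ¬ (countM board222 true B12 < 2) by decide) black_push_B12 ?_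
  refine AGame.FW.terminal false _ ?_
  exact (wins_agr agr_black_push_B12 true).mpr (show countM board222 false W1 < 2 by decide)

/-- Black to move wins from `C2`. -/
lemma fw_C2 : AGame.FW G222 true true C2 := by
  refine AGame.FW.self C2 _ (show ¬ (countM board222 true C2 < 2) by decide) black_push_C2 ?_
  refine AGame.FW.terminal false _ ?_
  exact (wins_agr agr_black_push_C2 true).mpr (show countM board222 false W2 < 2 by decide)

/-- Gray to move loses from `C1`. -/
lemma fw_C1 : AGame.FW G222 true false C1 := by
  refine AGame.FW.opp C1 (show ¬ (countM board222 true C1 < 2) by decide)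
    ⟨_, gray_move_C1⟩ ?_
  intro q hq
  exact fw_agr fw_C2 q (agr_symm (gray_C1 q hq))

/-- Gray to move loses from `B11`. -/
lemma fw_B11_gray : AGame.FW G222 true false B11 := by
  refine AGame.FW.opp B11 (show ¬ (countM board222 true B11 < 2) by decide)
    ⟨_, gray_move_B11⟩ ?_
  intro q hq
  exact fw_agr fw_B12 q (agr_symm (gray_B11 q hq))

/-- Black to move wins from `B11`. -/
lemma fw_B11_black : AGame.FW G222 true true B11 := by
  refine AGame.FW.self B11 _ (show ¬ (countM board222 true B11 < 2) by decide) black_move_B11 ?_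
  exact fw_agr fw_C1 _ (agr_symm agr_black_move_B11)

end Abalone

open Abalone AGame in
/-- in 2×2×2 Abalone, board `B11` (Black on the left-top and center
spaces, Gray on the left-bottom and middle-bottom spaces) is a win for Black
regardless of who moves first: `o(B11) = L`. -/
theorem B11_black_always_wins : G222.OutL B11 :=
  ⟨fw_B11_black, fw_B11_gray⟩
end

section
/- In 2×2×2 Abalone, the standard-setup starting board B0 (each player's two marbles lined up on opposite edges) is a first-player win: whoever moves first can move both of their marbles into the middle column, reaching a position from which they have a winning strategy. -/
namespace Abalone

/-- the position after Black's opening broadside: black `mt,mm`, gray `rt,rb`. -/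
def P1 : Pos := mk2 mt mm rt rb
/-- after Gray's forced reply `rb → mb`. -/
def Q2 : Pos := mk2 mt mm mb rt
/-- after Black's winning push (gray marble ejected). -/
def W3 : Pos := mk2 mm mb rt rt

/-- mirror images for Gray moving first. -/
def P1' : Pos := mk2 lt lb mt mm
def Q2' : Pos := mk2 lt mb mt mm
def W3' : Pos := mk2 lt lt mm mb

lemma mem_board (y : Cell) :
    y ∈ board222 ↔ y = lt ∨ y = lb ∨ y = mt ∨ y = mm ∨ y = mb ∨ y = rt ∨ y = rb := by
  simp [board222]

lemma exlt1 (p : ℕ → Prop) : (∃ i < 1, p i) ↔ p 0 := by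
  constructor
  · rintro ⟨i, hi, hp⟩; interval_cases i; exact hp
  · exact fun h => ⟨0, by omega, h⟩

lemma exlt2 (p : ℕ → Prop) : (∃ i < 2, p i) ↔ p 0 ∨ p 1 := by
  constructor
  · rintro ⟨i, hi, hp⟩; interval_cases i; exacts [Or.inl hp, Or.inr hp]
  · rintro (h | h); exacts [⟨0, by omega, h⟩, ⟨1, by omega, h⟩]

lemma exi1 (p : ℕ → Prop) : (∃ i, 1 ≤ i ∧ i ≤ 1 ∧ p i) ↔ p 1 := by
  constructor
  · rintro ⟨i, h1, h2, hp⟩; interval_cases i; exact hp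
  · exact fun h => ⟨1, le_refl _, le_refl _, h⟩

lemma exi3 (p : ℕ → Prop) : (∃ i, 1 ≤ i ∧ i ≤ 3 ∧ p i) ↔ p 1 ∨ p 2 ∨ p 3 := by
  constructor
  · rintro ⟨i, h1, h2, hp⟩; interval_cases i; exacts [Or.inl hp, Or.inr (Or.inl hp), Or.inr (Or.inr hp)]
  · rintro (h | h | h)
    exacts [⟨1, by omega, by omega, h⟩, ⟨2, by omega, by omega, h⟩, ⟨3, by omega, by omega, h⟩]

lemma E1 : broadResult B0 true lt (0,1) (1,-1) 2 = P1 := by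
  funext y
  simp only [broadResult, exlt2 (fun i => y = stepc _ i _),
    exlt2 (fun i => y = addc (stepc _ i _) _), stepc_zero]
  by_cases h1 : y = lt <;> by_cases h2 : y = lb <;> by_cases h3 : y = mt <;>
    by_cases h4 : y = mm <;> by_cases h5 : y = rt <;> by_cases h6 : y = rb <;>
    simp_all [P1, B0, mk2, stepc, addc, Prod.ext_iff, lt, lb, mt, mm, mb, rt, rb] <;>
    (try (split_ifs <;> first | rfl | (exfalso; omega)))

lemma E2 : broadResult B0 false rt (0,1) (-1,0) 2 = P1' := by
  funext y
  simp only [broadResult, exlt2 (fun i => y = stepc _ i _),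
    exlt2 (fun i => y = addc (stepc _ i _) _), stepc_zero]
  by_cases h1 : y = lt <;> by_cases h2 : y = lb <;> by_cases h3 : y = mt <;>
    by_cases h4 : y = mm <;> by_cases h5 : y = rt <;> by_cases h6 : y = rb <;>
    simp_all [P1', B0, mk2, stepc, addc, Prod.ext_iff, lt, lb, mt, mm, mb, rt, rb] <;>
    (try (split_ifs <;> first | rfl | (exfalso; omega)))

lemma E3 (d : Cell) : broadResult P1 false rb d (-1,1) 1 = Q2 := by
  funext y
  simp only [broadResult, exlt1 (fun i => y = stepc _ i _),
    exlt1 (fun i => y = addc (stepc _ i _) _), stepc_zero]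
  by_cases h1 : y = rb <;> by_cases h2 : y = mb <;> by_cases h3 : y = rt <;>
    by_cases h4 : y = mt <;> by_cases h5 : y = mm <;>
    simp_all [P1, Q2, mk2, addc, Prod.ext_iff, lt, lb, mt, mm, mb, rt, rb] <;>
    (try (split_ifs <;> first | rfl | (exfalso; omega)))

lemma E4 (d : Cell) : broadResult P1' true lb d (1,0) 1 = Q2' := by
  funext y
  simp only [broadResult, exlt1 (fun i => y = stepc _ i _),
    exlt1 (fun i => y = addc (stepc _ i _) _), stepc_zero]
  by_cases h1 : y = lb <;> by_cases h2 : y = mb <;> by_cases h3 : y = lt <;>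
    by_cases h4 : y = mt <;> by_cases h5 : y = mm <;>
    simp_all [P1', Q2', mk2, addc, Prod.ext_iff, lt, lb, mt, mm, mb, rt, rb] <;>
    (try (split_ifs <;> first | rfl | (exfalso; omega)))

lemma off_none (b1 b2 g1 g2 : Cell) (hb1 : b1 ∈ board222) (hb2 : b2 ∈ board222)
    (hg1 : g1 ∈ board222) (hg2 : g2 ∈ board222) (y : Cell) (hy : y ∉ board222) :
    mk2 b1 b2 g1 g2 y = none := by
  have h1 : y ≠ b1 := fun h => hy (h ▸ hb1)
  have h2 : y ≠ b2 := fun h => hy (h ▸ hb2)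
  have h3 : y ≠ g1 := fun h => hy (h ▸ hg1)
  have h4 : y ≠ g2 := fun h => hy (h ▸ hg2)
  simp [mk2, h1, h2, h3, h4]

lemma E5 : shiftResult board222 P1 rb (-1,1) 1 = Q2 := by
  funext y
  simp only [shiftResult, exi1 (fun i => y = stepc _ i _)]
  by_cases hy : y ∈ board222
  · rw [if_neg (by simpa using hy)]
    rw [mem_board] at hy
    rcases hy with rfl|rfl|rfl|rfl|rfl|rfl|rfl <;>
      simp [P1, Q2, mk2, stepc, addc, negd, Prod.ext_iff, lt, lb, mt, mm, mb, rt, rb]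
  · rw [if_pos (by simpa using hy)]
    exact (off_none mt mm mb rt (by decide) (by decide) (by decide) (by decide) y hy).symm

lemma E6 : shiftResult board222 P1' lb (1,0) 1 = Q2' := by
  funext y
  simp only [shiftResult, exi1 (fun i => y = stepc _ i _)]
  by_cases hy : y ∈ board222
  · rw [if_neg (by simpa using hy)]
    rw [mem_board] at hy
    rcases hy with rfl|rfl|rfl|rfl|rfl|rfl|rfl <;>
      simp [P1', Q2', mk2, stepc, addc, negd, Prod.ext_iff, lt, lb, mt, mm, mb, rt, rb]
  · rw [if_pos (by simpa using hy)]
    exact (off_none lt mb mt mm (by decide) (by decide) (by decide) (by decide) y hy).symm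

lemma E7 : shiftResult board222 Q2 mt (0,1) 3 = W3 := by
  funext y
  simp only [shiftResult, exi3 (fun i => y = stepc _ i _)]
  by_cases hy : y ∈ board222
  · rw [if_neg (by simpa using hy)]
    rw [mem_board] at hy
    rcases hy with rfl|rfl|rfl|rfl|rfl|rfl|rfl <;>
      simp [Q2, W3, mk2, stepc, addc, negd, Prod.ext_iff, lt, lb, mt, mm, mb, rt, rb]
  · rw [if_pos (by simpa using hy)]
    exact (off_none mm mb rt rt (by decide) (by decide) (by decide) (by decide) y hy).symm

lemma E8 : shiftResult board222 Q2' mt (0,1) 3 = W3' := by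
  funext y
  simp only [shiftResult, exi3 (fun i => y = stepc _ i _)]
  by_cases hy : y ∈ board222
  · rw [if_neg (by simpa using hy)]
    rw [mem_board] at hy
    rcases hy with rfl|rfl|rfl|rfl|rfl|rfl|rfl <;>
      simp [Q2', W3', mk2, stepc, addc, negd, Prod.ext_iff, lt, lb, mt, mm, mb, rt, rb]
  · rw [if_pos (by simpa using hy)]
    exact (off_none lt lt mm mb (by decide) (by decide) (by decide) (by decide) y hy).symm

end Abalone

namespace Abalone

set_option maxHeartbeats 1000000 in
lemma moves_from_P1 (q : Pos) (h : Move board222 2 false P1 q) : q = Q2 := by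
  rcases h with ⟨x, d, hd, k, m, hk1, hk2, hm, hown, hopp, htail, rfl⟩ |
    ⟨x, d, e, hd, he, hed, hend, k, hk1, hk2, hown, htgt, rfl⟩
  · obtain ⟨hxb, hxv⟩ := hown 0 (by omega)
    rw [stepc_zero] at hxb hxv
    rw [mem_board] at hxb
    have hx : x = rt ∨ x = rb := by
      rcases hxb with rfl|rfl|rfl|rfl|rfl|rfl|rfl <;> revert hxv <;> decide
    clear hxv
    simp only [dirs, List.mem_cons, List.not_mem_nil, or_false] at hd
    rcases hx with rfl|rfl <;> rcases hd with rfl|rfl|rfl|rfl|rfl|rfl <;>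
      interval_cases k <;> interval_cases m <;>
      first
      | exact E5
      | exact absurd (hown 1 (by omega)).2 (by decide)
      | exact absurd (hopp 2 (by omega) (by omega)).1 (by decide)
      | exact absurd (hopp 2 (by omega) (by omega)).2 (by decide)
      | (obtain ⟨-, h2, h3⟩ | ⟨h1, -⟩ := htail
         · first
           | exact absurd h2 (by decide)
           | exact absurd h3 (by decide)
         · omega)
  · obtain ⟨hxb, hxv⟩ := hown 0 (by omega)
    rw [stepc_zero] at hxb hxv
    rw [mem_board] at hxb
    have hx : x = rt ∨ x = rb := by
      rcases hxb with rfl|rfl|rfl|rfl|rfl|rfl|rfl <;> revert hxv <;> decide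
    clear hxv
    simp only [dirs, List.mem_cons, List.not_mem_nil, or_false] at hd he
    rcases hx with rfl|rfl <;> rcases hd with rfl|rfl|rfl|rfl|rfl|rfl <;>
      rcases he with rfl|rfl|rfl|rfl|rfl|rfl <;> interval_cases k <;>
      first
      | exact E3 _
      | exact absurd rfl hed
      | exact absurd (by decide) hend
      | exact absurd (hown 1 (by omega)).1 (by decide)
      | exact absurd (hown 1 (by omega)).2 (by decide)
      | exact absurd (htgt 0 (by omega)).1 (by decide)
      | exact absurd (htgt 0 (by omega)).2 (by decide)
      | exact absurd (htgt 1 (by omega)).1 (by decide)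
      | exact absurd (htgt 1 (by omega)).2 (by decide)

end Abalone

namespace Abalone

set_option maxHeartbeats 1000000 in
lemma moves_from_P1' (q : Pos) (h : Move board222 2 true P1' q) : q = Q2' := by
  rcases h with ⟨x, d, hd, k, m, hk1, hk2, hm, hown, hopp, htail, rfl⟩ |
    ⟨x, d, e, hd, he, hed, hend, k, hk1, hk2, hown, htgt, rfl⟩
  · obtain ⟨hxb, hxv⟩ := hown 0 (by omega)
    rw [stepc_zero] at hxb hxv
    rw [mem_board] at hxb
    have hx : x = lt ∨ x = lb := by
      rcases hxb with rfl|rfl|rfl|rfl|rfl|rfl|rfl <;> revert hxv <;> decide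
    clear hxv
    simp only [dirs, List.mem_cons, List.not_mem_nil, or_false] at hd
    rcases hx with rfl|rfl <;> rcases hd with rfl|rfl|rfl|rfl|rfl|rfl <;>
      interval_cases k <;> interval_cases m <;>
      first
      | exact E6
      | exact absurd (hown 1 (by omega)).2 (by decide)
      | exact absurd (hopp 2 (by omega) (by omega)).1 (by decide)
      | exact absurd (hopp 2 (by omega) (by omega)).2 (by decide)
      | (obtain ⟨-, h2, h3⟩ | ⟨h1, -⟩ := htail
         · first
           | exact absurd h2 (by decide)
           | exact absurd h3 (by decide)
         · omega)
  · obtain ⟨hxb, hxv⟩ := hown 0 (by omega)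
    rw [stepc_zero] at hxb hxv
    rw [mem_board] at hxb
    have hx : x = lt ∨ x = lb := by
      rcases hxb with rfl|rfl|rfl|rfl|rfl|rfl|rfl <;> revert hxv <;> decide
    clear hxv
    simp only [dirs, List.mem_cons, List.not_mem_nil, or_false] at hd he
    rcases hx with rfl|rfl <;> rcases hd with rfl|rfl|rfl|rfl|rfl|rfl <;>
      rcases he with rfl|rfl|rfl|rfl|rfl|rfl <;> interval_cases k <;>
      first
      | exact E4 _
      | exact absurd rfl hed
      | exact absurd (by decide) hend
      | exact absurd (hown 1 (by omega)).1 (by decide)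
      | exact absurd (hown 1 (by omega)).2 (by decide)
      | exact absurd (htgt 0 (by omega)).1 (by decide)
      | exact absurd (htgt 0 (by omega)).2 (by decide)
      | exact absurd (htgt 1 (by omega)).1 (by decide)
      | exact absurd (htgt 1 (by omega)).2 (by decide)

/-- Black's winning push from `Q2`. -/
lemma push_black : Move board222 2 true Q2 W3 := by
  refine Or.inl ⟨mt, (0,1), by simp [dirs], 2, 1, by omega, by omega, by omega, ?_, ?_, ?_, E7.symm⟩
  · intro i hi; interval_cases i <;> exact ⟨by decide, by decide⟩
  · intro i h1 h2; interval_cases i; exact ⟨by decide, by decide⟩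
  · exact Or.inr ⟨le_refl _, Or.inl (by decide)⟩

/-- Gray's winning push from `Q2'`. -/
lemma push_gray : Move board222 2 false Q2' W3' := by
  refine Or.inl ⟨mt, (0,1), by simp [dirs], 2, 1, by omega, by omega, by omega, ?_, ?_, ?_, E8.symm⟩
  · intro i hi; interval_cases i <;> exact ⟨by decide, by decide⟩
  · intro i h1 h2; interval_cases i; exact ⟨by decide, by decide⟩
  · exact Or.inr ⟨le_refl _, Or.inl (by decide)⟩

/-- Black's opening broadside `lt,lb → mt,mm`. -/
lemma open_black : Move board222 2 true B0 P1 := by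
  refine Or.inr ⟨lt, (0,1), (1,-1), by simp [dirs], by simp [dirs], by decide, by decide,
    2, by omega, by omega, ?_, ?_, E1.symm⟩
  · intro i hi; interval_cases i <;> exact ⟨by decide, by decide⟩
  · intro i hi; interval_cases i <;> exact ⟨by decide, by decide⟩

/-- Gray's opening broadside `rt,rb → mt,mm`. -/
lemma open_gray : Move board222 2 false B0 P1' := by
  refine Or.inr ⟨rt, (0,1), (-1,0), by simp [dirs], by simp [dirs], by decide, by decide,
    2, by omega, by omega, ?_, ?_, E2.symm⟩
  · intro i hi; interval_cases i <;> exact ⟨by decide, by decide⟩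
  · intro i hi; interval_cases i <;> exact ⟨by decide, by decide⟩

/-- Black's only reply from `P1'`. -/
lemma reply_black : Move board222 2 true P1' Q2' := Or.inr
  ⟨lb, (0,1), (1,0), by simp [dirs], by simp [dirs], by decide, by decide, 1, le_refl _,
    by omega, fun i hi => by interval_cases i; exact ⟨by decide, by decide⟩,
    fun i hi => by interval_cases i; exact ⟨by decide, by decide⟩, (E4 _).symm⟩

/-- Gray's only reply from `P1`. -/
lemma reply_gray : Move board222 2 false P1 Q2 := Or.inr
  ⟨rb, (0,1), (-1,1), by simp [dirs], by simp [dirs], by decide, by decide, 1, le_refl _,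
    by omega, fun i hi => by interval_cases i; exact ⟨by decide, by decide⟩,
    fun i hi => by interval_cases i; exact ⟨by decide, by decide⟩, (E3 _).symm⟩

end Abalone


open Abalone AGame in
/-- in 2×2×2 Abalone the standard-setup starting board `B0` (each
player's two marbles lined up on opposite edge columns) is a first-player win:
`o(B0) = N`, i.e. whichever player moves first has a winning strategy. -/
theorem B0_first_player_wins : G222.OutN B0 := by
  constructor
  · exact FW.self B0 P1 (by decide : ¬ countM board222 true B0 < 2) open_black
      (FW.opp P1 (by decide : ¬ countM board222 true P1 < 2) ⟨Q2, reply_gray⟩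
        (fun q hq => by
          rw [moves_from_P1 q hq]
          exact FW.self Q2 W3 (by decide : ¬ countM board222 true Q2 < 2) push_black
            (FW.terminal false W3 (by decide : countM board222 false W3 < 2))))
  · exact FW.self B0 P1' (by decide : ¬ countM board222 false B0 < 2) open_gray
      (FW.opp P1' (by decide : ¬ countM board222 false P1' < 2) ⟨Q2', reply_black⟩
        (fun q hq => by
          rw [moves_from_P1' q hq]
          exact FW.self Q2' W3' (by decide : ¬ countM board222 false Q2' < 2) push_gray
            (FW.terminal true W3' (by decide : countM board222 true W3' < 2))))
end
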